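/- arXiv:math/0005306 — 2 statements merged into one kernel-verified Lean document; each statement's English description precedes it below -/
import Mathlib

section
/- Let u₁(s), u₂(s) solve the characteristic ODE along two characteristics γ₁, γ₂ with γ₁(s) ≠ γ₂(s), so that y(s) = (u₁(s) - u₂(s))/(γ₁(s) - γ₂(s)) satisfies y'(s) = -y(s)² + g(s) with |g(s)| ≤ C for s ∈ [t₀, t], where g is continuous. Then y(t) ≤ √C · coth(√C (t - t₀)); in particular y(t) is bounded above by a constant depending only on C and t - t₀, uniformly in the initial value y(t₀). -/
open Real Set Filter

/-- `sinh u ≤ u * cosh u` for `0 ≤ u`. -/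
lemma sinh_le_mul_cosh {u : ℝ} (hu : 0 ≤ u) : Real.sinh u ≤ u * Real.cosh u := by
  have hder : ∀ x : ℝ, HasDerivAt (fun v => Real.sinh v - v * Real.cosh v)
      (-(x * Real.sinh x)) x := by
    intro x
    have h1 : HasDerivAt (fun v : ℝ => v * Real.cosh v)
        (1 * Real.cosh x + x * Real.sinh x) x :=
      (hasDerivAt_id x).mul (Real.hasDerivAt_cosh x)
    have : HasDerivAt (fun v => Real.sinh v - v * Real.cosh v)
        (Real.cosh x - (1 * Real.cosh x + x * Real.sinh x)) x := (Real.hasDerivAt_sinh x).sub h1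
    convert this using 1; ring
  have hmono : AntitoneOn (fun v => Real.sinh v - v * Real.cosh v) (Ici (0:ℝ)) := by
    apply antitoneOn_of_deriv_nonpos (convex_Ici 0)
    · exact (Continuous.continuousOn (by continuity))
    · intro x hx
      exact ((hder x).differentiableAt).differentiableWithinAt
    · intro x hx
      rw [interior_Ici] at hx
      rw [(hder x).deriv]
      have : 0 ≤ x * Real.sinh x :=
        mul_nonneg (le_of_lt hx) (Real.sinh_nonneg_iff.2 (le_of_lt hx))
      linarith
  have := hmono (le_refl (0:ℝ)) hu hu
  simp only [Real.sinh_zero, Real.cosh_zero, mul_one, zero_mul, sub_zero] at this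
  linarith

/-- Riccati comparison (equation (A.12) of E–Khanin–Mazel–Sinai): if
`y' = -y² + g` on `[t₀, t]` with continuous `g`, `|g| ≤ C` and `C > 0`, then
`y(t) ≤ √C · coth(√C (t - t₀))`, uniformly in the initial value `y(t₀)`. -/
theorem stmt_7 (y g : ℝ → ℝ) (t₀ t C : ℝ) (hC : 0 < C) (ht : t₀ < t)
    (hg : ContinuousOn g (Set.Icc t₀ t))
    (hgb : ∀ s ∈ Set.Icc t₀ t, |g s| ≤ C)
    (hy : ∀ s ∈ Set.Icc t₀ t, HasDerivAt y (-(y s) ^ 2 + g s) s) :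
    y t ≤ Real.sqrt C *
      (Real.cosh (Real.sqrt C * (t - t₀)) / Real.sinh (Real.sqrt C * (t - t₀))) := by
  have hyc : ContinuousOn y (Set.Icc t₀ t) := fun s hs =>
    (hy s hs).continuousAt.continuousWithinAt
  -- a uniform bound on y
  obtain ⟨M, hM⟩ : ∃ M : ℝ, ∀ s ∈ Set.Icc t₀ t, ‖y s‖ ≤ M :=
    isCompact_Icc.exists_bound_of_continuousOn hyc
  have hM0 : 0 ≤ M := le_trans (norm_nonneg _) (hM t (by constructor <;> linarith))
  -- Key step: the bound with `C + ε` for every `ε > 0`.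
  have key : ∀ ε : ℝ, 0 < ε → y t ≤ Real.sqrt (C + ε) *
      (Real.cosh (Real.sqrt (C + ε) * (t - t₀)) / Real.sinh (Real.sqrt (C + ε) * (t - t₀))) := by
    intro ε hε
    set k := Real.sqrt (C + ε) with hk
    have hCε : (0:ℝ) < C + ε := by linarith
    have hkpos : 0 < k := Real.sqrt_pos.2 hCε
    have hk2 : k ^ 2 = C + ε := Real.sq_sqrt hCε.le
    -- choose a starting point `a = t₀ + δ`
    set δ : ℝ := min ((t - t₀) / 2) (1 / (M + 1)) with hδdef
    have hδpos : 0 < δ := lt_min (by linarith) (by positivity)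
    have hδle : δ ≤ (t - t₀) / 2 := min_le_left _ _
    have hδM : δ ≤ 1 / (M + 1) := min_le_right _ _
    set a : ℝ := t₀ + δ with ha
    have haI : t₀ < a := by simp [ha]; linarith
    have hat : a < t := by simp [ha]; linarith
    -- barrier function
    set B : ℝ → ℝ := fun s => k * (Real.cosh (k * (s - t₀)) / Real.sinh (k * (s - t₀))) with hB
    set B' : ℝ → ℝ := fun s => -(B s) ^ 2 + (C + ε) with hB'
    have hBderiv : ∀ x ∈ Set.Icc a t, HasDerivAt B (B' x) x := by
      intro x hx
      have hxpos : 0 < k * (x - t₀) := by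
        have : t₀ < x := lt_of_lt_of_le haI hx.1
        have : 0 < x - t₀ := by linarith
        exact mul_pos hkpos this
      have hsinhpos : 0 < Real.sinh (k * (x - t₀)) := Real.sinh_pos_iff.2 hxpos
      have hu : HasDerivAt (fun s : ℝ => k * (s - t₀)) k x := by
        simpa using ((hasDerivAt_id x).sub_const t₀).const_mul k
      have hcosh : HasDerivAt (fun s : ℝ => Real.cosh (k * (s - t₀)))
          (Real.sinh (k * (x - t₀)) * k) x := hu.cosh
      have hsinh : HasDerivAt (fun s : ℝ => Real.sinh (k * (s - t₀)))
          (Real.cosh (k * (x - t₀)) * k) x := hu.sinh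
      have hdiv := hcosh.div hsinh hsinhpos.ne'
      have hfinal : HasDerivAt B (k * ((Real.sinh (k * (x - t₀)) * k * Real.sinh (k * (x - t₀)) -
          Real.cosh (k * (x - t₀)) * (Real.cosh (k * (x - t₀)) * k)) / Real.sinh (k * (x - t₀)) ^ 2)) x :=
        hdiv.const_mul k
      convert hfinal using 1
      have hid : Real.cosh (k * (x - t₀)) ^ 2 - Real.sinh (k * (x - t₀)) ^ 2 = 1 :=
        Real.cosh_sq_sub_sinh_sq _
      simp only [hB', hB]
      rw [← hk2]
      field_simp
      nlinarith [hsinhpos, hid, sq_nonneg (Real.sinh (k * (x - t₀)))]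
    -- initial comparison at `a`
    have hinit : y a ≤ B a := by
      have hya : y a ≤ M := by
        have := hM a ⟨haI.le, hat.le⟩
        exact le_trans (le_abs_self _) this
      have hBa : M + 1 ≤ B a := by
        have h1 : B a = k * (Real.cosh (k * δ) / Real.sinh (k * δ)) := by
          simp [hB, ha]
        have hsinhpos : 0 < Real.sinh (k * δ) := Real.sinh_pos_iff.2 (by positivity)
        have h2 : Real.sinh (k * δ) ≤ (k * δ) * Real.cosh (k * δ) :=
          sinh_le_mul_cosh (by positivity)
        have h3 : 1 / δ ≤ k * (Real.cosh (k * δ) / Real.sinh (k * δ)) := by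
          rw [← mul_div_assoc, div_le_div_iff₀ hδpos hsinhpos]
          nlinarith [h2]
        have h4 : M + 1 ≤ 1 / δ := by
          rw [le_div_iff₀ hδpos]
          calc (M + 1) * δ ≤ (M + 1) * (1 / (M + 1)) := by
                apply mul_le_mul_of_nonneg_left hδM (by positivity)
            _ = 1 := by field_simp
        rw [h1]; linarith
      linarith
    -- apply the fencing theorem on `[a, t]`
    have hIccsub : Set.Icc a t ⊆ Set.Icc t₀ t :=
      Set.Icc_subset_Icc haI.le le_rfl
    have comp : y t ≤ B t := by
      have := image_le_of_deriv_right_lt_deriv_boundary'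
        (f := y) (f' := fun s => -(y s) ^ 2 + g s) (a := a) (b := t)
        (hyc.mono hIccsub)
        (fun x hx => (hy x (hIccsub ⟨hx.1, hx.2.le⟩)).hasDerivWithinAt)
        hinit
        (fun x hx => ((hBderiv x ⟨hx.1, hx.2⟩).continuousAt).continuousWithinAt)
        (fun x hx => (hBderiv x ⟨hx.1, hx.2.le⟩).hasDerivWithinAt)
        ?_ ⟨hat.le, le_rfl⟩
      · exact this
      · intro x hx hcontact
        have hgx : |g x| ≤ C := hgb x (hIccsub ⟨hx.1, hx.2.le⟩)
        have : g x ≤ C := (abs_le.1 hgx).2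
        simp only [hB', hcontact]
        linarith
    simpa [hB] using comp
  -- take the limit `ε → 0⁺`
  set T : ℝ := t - t₀ with hT
  have hTpos : 0 < T := by simp [hT]; linarith
  set F : ℝ → ℝ := fun ε =>
    Real.sqrt (C + ε) * (Real.cosh (Real.sqrt (C + ε) * T) / Real.sinh (Real.sqrt (C + ε) * T))
    with hF
  have hsinh0 : Real.sinh (Real.sqrt C * T) ≠ 0 := by
    have : 0 < Real.sinh (Real.sqrt C * T) :=
      Real.sinh_pos_iff.2 (by positivity)
    exact this.ne'
  have hFc : ContinuousAt F 0 := by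
    have hs : ContinuousAt (fun ε : ℝ => Real.sqrt (C + ε)) 0 :=
      (Real.continuous_sqrt.comp (continuous_const.add continuous_id)).continuousAt
    have hsT : ContinuousAt (fun ε : ℝ => Real.sqrt (C + ε) * T) 0 :=
      hs.mul continuousAt_const
    have hc : ContinuousAt (fun ε : ℝ => Real.cosh (Real.sqrt (C + ε) * T)) 0 :=
      Real.continuous_cosh.continuousAt.comp hsT
    have hsi : ContinuousAt (fun ε : ℝ => Real.sinh (Real.sqrt (C + ε) * T)) 0 :=
      Real.continuous_sinh.continuousAt.comp hsT
    have hden : Real.sinh (Real.sqrt (C + 0) * T) ≠ 0 := by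
      simpa using hsinh0
    exact hs.mul (hc.div hsi hden)
  have hlim : Tendsto F (nhdsWithin 0 (Set.Ioi 0)) (nhds (F 0)) :=
    hFc.continuousWithinAt.tendsto
  have hev : ∀ᶠ ε in nhdsWithin (0:ℝ) (Set.Ioi 0), y t ≤ F ε :=
    eventually_nhdsWithin_of_forall (fun ε hε => key ε hε)
  have : y t ≤ F 0 := ge_of_tendsto hlim hev
  simpa [hF, hT] using this
end

section
/- Let a: ℤ≥0 → ℝ be a cocycle-type sum: suppose λ_j^s are real numbers with (1/n)Σ_{j=0}^{n-1} λ_j^s → -λ < 0 as n → ∞. Then for every ε ∈ (0, λ) there exists C ≥ 0 such that exp(Σ_{j=m}^{m+n-1} λ_j^s) ≤ C·e^{-n(λ-ε)}·e^{εm} for all m, n ≥ 0, provided additionally that Σ_{j=k}^{m-1}(-λ_j^s) ≤ εm whenever δ₃m ≤ k ≤ m-1 for m large (for suitable δ₃ < 1). -/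
open Filter

/-- Tempered growth of the stable cocycle (key step of Lemma 6.6 of
E–Khanin–Mazel–Sinai): if the one-step stable Lyapunov increments `λ_j^s` have Birkhoff
average `-λ < 0`, then for `ε ∈ (0, λ)`, under the additional control
`Σ_{j=k}^{m-1} (-λ_j^s) ≤ ε m` for `δ₃ m ≤ k ≤ m-1` and `m` large (`δ₃ < 1`), there is a
constant `C ≥ 0` with `exp(Σ_{j=m}^{m+n-1} λ_j^s) ≤ C e^{-n(λ-ε)} e^{ε m}` for all
`m, n ≥ 0`. -/
theorem stmt_18 (l : ℕ → ℝ) (lam ε δ₃ : ℝ) (M₀ : ℕ)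
    (hlam : 0 < lam)
    (havg : Tendsto (fun n : ℕ => (∑ j ∈ Finset.range n, l j) / n) atTop (nhds (-lam)))
    (hε : ε ∈ Set.Ioo 0 lam) (hδ₃ : δ₃ < 1)
    (hextra : ∀ m : ℕ, M₀ ≤ m → ∀ k : ℕ, δ₃ * m ≤ k → k ≤ m - 1 →
      (∑ j ∈ Finset.Ico k m, -l j) ≤ ε * m) :
    ∃ Cc : ℝ, 0 ≤ Cc ∧ ∀ m n : ℕ,
      Real.exp (∑ j ∈ Finset.Ico m (m + n), l j)
        ≤ Cc * Real.exp (-(n : ℝ) * (lam - ε)) * Real.exp (ε * m) := by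
  obtain ⟨hε0, hel⟩ := hε
  set f : ℕ → ℝ := fun n => ∑ j ∈ Finset.range n, l j with hf
  -- eventual bound |f n + n*lam| ≤ (ε/2)*n
  have hev : ∀ᶠ n : ℕ in atTop, |f n / n - (-lam)| < ε / 2 := by
    have := Metric.tendsto_atTop.mp havg (ε / 2) (by linarith)
    obtain ⟨N, hN⟩ := this
    filter_upwards [eventually_ge_atTop N] with n hn
    simpa [Real.dist_eq] using hN n hn
  obtain ⟨N, hN⟩ := eventually_atTop.mp hev
  have key : ∀ n : ℕ, N + 1 ≤ n → |f n + n * lam| ≤ ε / 2 * n := by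
    intro n hn
    have hnpos : (0 : ℝ) < n := by exact_mod_cast Nat.lt_of_lt_of_le (Nat.succ_pos N) hn
    have h := hN n (le_trans (Nat.le_succ N) hn)
    have : |f n / n + lam| < ε / 2 := by simpa [sub_neg_eq_add] using h
    have h2 : |f n / n + lam| * n ≤ ε / 2 * n := by
      exact mul_le_mul_of_nonneg_right this.le hnpos.le
    calc |f n + n * lam| = |f n / n + lam| * n := by
          rw [← abs_of_pos hnpos, ← abs_mul]
          congr 1
          field_simp
          rw [abs_of_pos hnpos]
          ring
      _ ≤ ε / 2 * n := h2
  -- global bound with additive constant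
  set B : ℝ := ∑ i ∈ Finset.range (N + 1), |f i + i * lam| with hB
  have hB0 : 0 ≤ B := Finset.sum_nonneg fun i _ => abs_nonneg _
  have glob : ∀ n : ℕ, |f n + n * lam| ≤ ε / 2 * n + B := by
    intro n
    rcases le_or_gt (N + 1) n with h | h
    · exact le_add_of_le_of_nonneg (key n h) hB0
    · have : |f n + n * lam| ≤ B := by
        apply Finset.single_le_sum (fun i _ => abs_nonneg (f i + i * lam))
        exact Finset.mem_range.mpr h
      have : |f n + n * lam| ≤ 0 + B := by linarith
      have hn0 : (0:ℝ) ≤ ε / 2 * n := by positivity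
      linarith
  refine ⟨Real.exp (2 * B), (Real.exp_pos _).le, fun m n => ?_⟩
  have hsum : ∑ j ∈ Finset.Ico m (m + n), l j = f (m + n) - f m := by
    rw [hf]
    exact Finset.sum_Ico_eq_sub _ (Nat.le_add_right m n)
  rw [hsum, ← Real.exp_add, ← Real.exp_add]
  apply Real.exp_le_exp.mpr
  have h1 := (abs_le.mp (glob (m + n))).2
  have h2 := (abs_le.mp (glob m)).1
  have hcast : ((m + n : ℕ) : ℝ) = (m : ℝ) + n := by push_cast; ring
  rw [hcast] at h1
  have hεn : ε / 2 * n ≤ ε * n := by nlinarith [Nat.cast_nonneg (α := ℝ) n]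
  nlinarith [Nat.cast_nonneg (α := ℝ) n, Nat.cast_nonneg (α := ℝ) m]
end
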